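/- arXiv:1908.09275 — 3 statements merged into one kernel-verified Lean document; each statement's English description precedes it below -/
import Mathlib

section
/- For n×n real symmetric positive semi-definite matrices A, B and α > 0, the minimum over unitary matrices U of ‖A^α − B^α U‖_F equals (tr[A^{2α} + B^{2α} − 2 (A^α B^{2α} A^α)^{1/2}])^{1/2}. -/
open Classical in
/-- The positive semi-definite square root of a positive semi-definite real matrix
(junk value `0` if the matrix is not positive semi-definite). -/
noncomputable def psdSqrt {n : ℕ} (M : Matrix (Fin n) (Fin n) ℝ) : Matrix (Fin n) (Fin n) ℝ :=
  if h : M.PosSemidef then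
    (h.1.eigenvectorUnitary : Matrix (Fin n) (Fin n) ℝ) *
      Matrix.diagonal ((↑) ∘ (NNReal.sqrt ∘ Real.toNNReal) ∘ h.1.eigenvalues) *
      (star h.1.eigenvectorUnitary : Matrix (Fin n) (Fin n) ℝ)
  else 0

open Classical in
/-- The real power `M ^ r` of a symmetric real matrix, defined through the spectral
functional calculus: `M ^ r = U diag(λᵢ^r) Uᵀ` (with `0 ^ r = 0` for `r > 0`).
Junk value `0` if `M` is not symmetric. -/
noncomputable def matPow {n : ℕ} (M : Matrix (Fin n) (Fin n) ℝ) (r : ℝ) :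
    Matrix (Fin n) (Fin n) ℝ :=
  if h : M.IsHermitian then
    (h.eigenvectorUnitary : Matrix (Fin n) (Fin n) ℝ) *
      Matrix.diagonal (fun i => h.eigenvalues i ^ r) *
      (star h.eigenvectorUnitary : Matrix (Fin n) (Fin n) ℝ)
  else 0

/-- The Frobenius norm of a real matrix. -/
noncomputable def frobNorm {n : ℕ} (M : Matrix (Fin n) (Fin n) ℝ) : ℝ :=
  Real.sqrt (∑ i, ∑ j, (M i j) ^ 2)

/-!
Write `X = A^α` and `Y = B^α`; both are symmetric, with `X² = A^{2α}` and `Y² = B^{2α}`.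
For orthogonal `U`, `‖X - YU‖_F² = tr X² + tr Y² - 2 tr (XYU)`, so the problem is to maximise
`tr (XYU)`. The polar decomposition gives `XY = PV` with `V` orthogonal and
`P = ((XY)(XY)ᵀ)^{1/2} = (X B^{2α} X)^{1/2}`, and `tr (PW) ≤ tr P` for every orthogonal `W`:
in an eigenbasis of `P` this is `∑ λᵢ Wᵢᵢ ≤ ∑ λᵢ`, as `λᵢ ≥ 0` and `Wᵢᵢ ≤ 1`.
Equality holds for `U = Vᵀ`.
-/

open Matrix

lemma Matrix.PosSemidef.transpose_eq {m : Type*} {P : Matrix m m ℝ} (hP : P.PosSemidef) :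
    Pᵀ = P := by
  simpa [conjTranspose_eq_transpose_of_trivial] using hP.1.eq

lemma Matrix.posSemidef_mul_transpose_self {m : Type*} [Fintype m] (M : Matrix m m ℝ) :
    (M * Mᵀ).PosSemidef := by
  simpa [conjTranspose_eq_transpose_of_trivial] using M.posSemidef_self_mul_conjTranspose

section Orthogonal

variable {m : Type*} [Fintype m] [DecidableEq m]

lemma mul_transpose_self_of_mem_unitaryGroup {U : Matrix m m ℝ} (hU : U ∈ unitaryGroup m ℝ) :
    U * Uᵀ = 1 := by
  simpa [star_eq_conjTranspose] using mem_unitaryGroup_iff.mp hU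

lemma unitary_conj_diagonal_mul (Q : unitaryGroup m ℝ) (f g : m → ℝ) :
    ((Q : Matrix m m ℝ) * diagonal f * (star Q : Matrix m m ℝ)) *
        ((Q : Matrix m m ℝ) * diagonal g * (star Q : Matrix m m ℝ)) =
      (Q : Matrix m m ℝ) * diagonal (fun i => f i * g i) * (star Q : Matrix m m ℝ) := by
  simpa [diagonal_mul_diagonal] using
    (map_mul (Unitary.conjStarAlgAut ℝ _ Q) (diagonal f) (diagonal g)).symm

lemma unitary_conj_diagonal_posSemidef (Q : unitaryGroup m ℝ) {f : m → ℝ} (hf : ∀ i, 0 ≤ f i) :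
    ((Q : Matrix m m ℝ) * diagonal f * (star Q : Matrix m m ℝ)).PosSemidef := by
  simpa [star_eq_conjTranspose] using
    (posSemidef_diagonal_iff.mpr hf).mul_mul_conjTranspose_same (Q : Matrix m m ℝ)

lemma trace_transpose_mul_self_sub_mul (X Y : Matrix m m ℝ) {U : Matrix m m ℝ}
    (hU : U ∈ unitaryGroup m ℝ) :
    ((X - Y * U)ᵀ * (X - Y * U)).trace
      = (Xᵀ * X).trace + (Yᵀ * Y).trace - 2 * (Xᵀ * Y * U).trace := by
  have hYU : ((Y * U)ᵀ * (Y * U)).trace = (Yᵀ * Y).trace := by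
    rw [transpose_mul, Matrix.mul_assoc, trace_mul_comm, Matrix.mul_assoc, Matrix.mul_assoc,
      mul_transpose_self_of_mem_unitaryGroup hU, Matrix.mul_one, trace_mul_comm]
  have hcross : ((Y * U)ᵀ * X).trace = (Xᵀ * Y * U).trace := by
    rw [← trace_transpose, transpose_mul, transpose_transpose, Matrix.mul_assoc]
  rw [transpose_sub, sub_mul, mul_sub, mul_sub, trace_sub, trace_sub, trace_sub, hYU, hcross,
    Matrix.mul_assoc Xᵀ]
  ring

lemma trace_mul_le_trace_of_posSemidef {P W : Matrix m m ℝ} (hP : P.PosSemidef)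
    (hW : W ∈ unitaryGroup m ℝ) : (P * W).trace ≤ P.trace := by
  set Q := hP.1.eigenvectorUnitary
  have hQW : (star Q : Matrix m m ℝ) * W * Q ∈ unitaryGroup m ℝ :=
    mul_mem (mul_mem (star Q).2 hW) Q.2
  have hspec : P = Q * diagonal hP.1.eigenvalues * (star Q : Matrix m m ℝ) := by
    simpa using hP.1.spectral_theorem
  calc (P * W).trace
      = (diagonal hP.1.eigenvalues * ((star Q : Matrix m m ℝ) * W * Q)).trace := by
        conv_lhs => rw [hspec, Matrix.mul_assoc, Matrix.mul_assoc, trace_mul_comm]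
        simp only [Matrix.mul_assoc]
    _ = ∑ i, hP.1.eigenvalues i * ((star Q : Matrix m m ℝ) * W * Q) i i := by
        simp [trace, diagonal_mul]
    _ ≤ ∑ i, hP.1.eigenvalues i := by
        gcongr with i
        exact mul_le_of_le_one_right (hP.eigenvalues_nonneg i)
          ((le_abs_self _).trans (entry_norm_bound_of_unitary hQW i i))
    _ = P.trace := by simpa using hP.1.trace_eq_sum_eigenvalues.symm

/-- The rows of `N` are orthogonal: normalise the nonzero ones and extend them to an orthonormal
basis, whose vectors are the rows of `W`. -/
lemma exists_unitary_eq_diagonal_sqrt_mul {N : Matrix m m ℝ} {d : m → ℝ}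
    (hN : N * Nᵀ = diagonal d) :
    ∃ W ∈ unitaryGroup m ℝ, N = diagonal (fun i => √(d i)) * W := by
  set r : m → EuclideanSpace ℝ m := fun i => WithLp.toLp 2 (N i)
  have hinner : ∀ i j, inner ℝ (r i) (r j) = diagonal d i j := fun i j => by
    rw [← hN]
    simp [r, PiLp.inner_apply, mul_apply, mul_comm]
  have hd : ∀ i, 0 ≤ d i := fun i => by
    have := real_inner_self_nonneg (x := r i)
    rwa [hinner, diagonal_apply_eq] at this
  set v : m → EuclideanSpace ℝ m := fun i => (√(d i))⁻¹ • r i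
  have horth : Orthonormal ℝ ({i | d i ≠ 0}.domRestrict v) := by
    rw [orthonormal_iff_ite]
    rintro ⟨i, hi⟩ ⟨j, hj⟩
    simp only [Set.domRestrict_apply, v, real_inner_smul_left, real_inner_smul_right, hinner,
      Subtype.mk.injEq]
    by_cases hij : i = j
    · subst hij
      have := Real.sqrt_pos.mpr ((hd i).lt_of_ne' hi)
      rw [diagonal_apply_eq, if_pos rfl]
      field_simp
      exact (Real.sq_sqrt (hd i)).symm
    · simp [hij]
  obtain ⟨b, hb⟩ := horth.exists_orthonormalBasis_extension_of_card_eq (by simp)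
  refine ⟨((EuclideanSpace.basisFun m ℝ).toBasis.toMatrix b)ᵀ, ?_, ?_⟩
  · simpa [star_eq_conjTranspose, conjTranspose_eq_transpose_of_trivial] using
      Unitary.star_mem ((EuclideanSpace.basisFun m ℝ).toMatrix_orthonormalBasis_mem_unitary b)
  · ext i j
    rw [diagonal_mul, transpose_apply, Module.Basis.toMatrix_apply]
    by_cases hdi : d i = 0
    · have hri : r i = 0 := by
        rw [← inner_self_eq_zero (𝕜 := ℝ), hinner, diagonal_apply_eq, hdi]
      simpa [hdi] using congrArg (· j) hri
    · have := Real.sqrt_pos.mpr ((hd i).lt_of_ne' hdi)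
      simp [hb i hdi, v, r]
      field_simp

lemma exists_unitary_eq_conj_diagonal_sqrt_mul {M Q : Matrix m m ℝ} {d : m → ℝ}
    (hQ : Q ∈ unitaryGroup m ℝ) (hMQ : star Q * (M * Mᵀ) * Q = diagonal d) :
    ∃ V ∈ unitaryGroup m ℝ, M = Q * diagonal (fun i => √(d i)) * star Q * V := by
  have hN : (star Q * M) * (star Q * M)ᵀ = diagonal d := by
    rw [← hMQ, transpose_mul, star_eq_conjTranspose, conjTranspose_eq_transpose_of_trivial,
      transpose_transpose]
    simp only [Matrix.mul_assoc]
  obtain ⟨W, hW, hNW⟩ := exists_unitary_eq_diagonal_sqrt_mul hN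
  refine ⟨Q * W, mul_mem hQ hW, ?_⟩
  calc M = Q * (star Q * M) := by
        rw [← Matrix.mul_assoc, mem_unitaryGroup_iff.mp hQ, Matrix.one_mul]
    _ = _ := by
        rw [hNW, Matrix.mul_assoc _ (star Q), ← Matrix.mul_assoc (star Q) Q W,
          mem_unitaryGroup_iff'.mp hQ, Matrix.one_mul, Matrix.mul_assoc]

end Orthogonal

lemma frobNorm_eq_sqrt_trace {n : ℕ} (M : Matrix (Fin n) (Fin n) ℝ) :
    frobNorm M = √(Mᵀ * M).trace := by
  simp only [frobNorm, trace, diag_apply, mul_apply, transpose_apply, ← pow_two]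
  rw [Finset.sum_comm]

section SpectralCalculus

variable {n : ℕ}

lemma matPow_posSemidef {A : Matrix (Fin n) (Fin n) ℝ} (hA : A.PosSemidef) (r : ℝ) :
    (matPow A r).PosSemidef := by
  rw [matPow, dif_pos hA.1]
  exact unitary_conj_diagonal_posSemidef _ fun i => Real.rpow_nonneg (hA.eigenvalues_nonneg i) r

lemma matPow_mul_self {A : Matrix (Fin n) (Fin n) ℝ} (hA : A.PosSemidef) (r : ℝ) :
    matPow A r * matPow A r = matPow A (2 * r) := by
  have hpow : (fun i => hA.1.eigenvalues i ^ r * hA.1.eigenvalues i ^ r) =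
      fun i => hA.1.eigenvalues i ^ (2 * r) := funext fun i => by
    rw [mul_comm 2 r, Real.rpow_mul (hA.eigenvalues_nonneg i), Real.rpow_two, sq]
  rw [matPow, matPow, dif_pos hA.1, dif_pos hA.1, unitary_conj_diagonal_mul, hpow]

lemma psdSqrt_eq {P : Matrix (Fin n) (Fin n) ℝ} (hP : P.PosSemidef) :
    psdSqrt P = (hP.1.eigenvectorUnitary : Matrix (Fin n) (Fin n) ℝ) *
      diagonal (fun i => √(hP.1.eigenvalues i)) *
      (star hP.1.eigenvectorUnitary : Matrix (Fin n) (Fin n) ℝ) := by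
  rw [psdSqrt, dif_pos hP]
  simp only [Function.comp_def, Real.sqrt]

lemma psdSqrt_posSemidef {P : Matrix (Fin n) (Fin n) ℝ} (hP : P.PosSemidef) :
    (psdSqrt P).PosSemidef :=
  psdSqrt_eq hP ▸ unitary_conj_diagonal_posSemidef _ fun _ => Real.sqrt_nonneg _

lemma exists_unitary_eq_psdSqrt_mul (M : Matrix (Fin n) (Fin n) ℝ) :
    ∃ V ∈ unitaryGroup (Fin n) ℝ, M = psdSqrt (M * Mᵀ) * V := by
  have hH := M.posSemidef_mul_transpose_self
  have hdiag := hH.1.conjStarAlgAut_star_eigenvectorUnitary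
  simp only [Unitary.conjStarAlgAut_apply, Unitary.coe_star, star_star, Function.comp_def,
    RCLike.ofReal_real_eq_id, id] at hdiag
  rw [psdSqrt_eq hH]
  exact exists_unitary_eq_conj_diagonal_sqrt_mul hH.1.eigenvectorUnitary.2 hdiag

end SpectralCalculus

theorem stmt2_general {n : ℕ} (A B : Matrix (Fin n) (Fin n) ℝ)
    (hA : A.PosSemidef) (hB : B.PosSemidef) (α : ℝ) :
    IsLeast {r : ℝ | ∃ U ∈ Matrix.unitaryGroup (Fin n) ℝ,
        r = frobNorm (matPow A α - matPow B α * U)}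
      (Real.sqrt ((matPow A (2 * α) + matPow B (2 * α)
          - 2 • psdSqrt (matPow A α * matPow B (2 * α) * matPow A α)).trace)) := by
  set X := matPow A α
  set Y := matPow B α
  have hX : Xᵀ = X := (matPow_posSemidef hA α).transpose_eq
  have hY : Yᵀ = Y := (matPow_posSemidef hB α).transpose_eq
  have hXX : X * X = matPow A (2 * α) := matPow_mul_self hA α
  have hYY : Y * Y = matPow B (2 * α) := matPow_mul_self hB α
  have hcost : ∀ U ∈ unitaryGroup (Fin n) ℝ, frobNorm (X - Y * U) =
      √((matPow A (2 * α)).trace + (matPow B (2 * α)).trace - 2 * (X * Y * U).trace) := by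
    intro U hU
    rw [frobNorm_eq_sqrt_trace, trace_transpose_mul_self_sub_mul X Y hU, hX, hY, hXX, hYY]
  have hXYXY : X * matPow B (2 * α) * X = X * Y * (X * Y)ᵀ := by
    rw [← hYY, transpose_mul, hX, hY]
    simp only [Matrix.mul_assoc]
  rw [hXYXY, trace_sub, trace_add, trace_smul, nsmul_eq_mul, Nat.cast_ofNat]
  obtain ⟨V, hV, hpolar⟩ := exists_unitary_eq_psdSqrt_mul (X * Y)
  set P := psdSqrt (X * Y * (X * Y)ᵀ)
  refine ⟨⟨star V, Unitary.star_mem hV, ?_⟩, ?_⟩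
  · rw [hcost _ (Unitary.star_mem hV), hpolar, Matrix.mul_assoc, mem_unitaryGroup_iff.mp hV,
      Matrix.mul_one]
  · rintro _ ⟨U, hU, rfl⟩
    rw [hcost U hU, hpolar, Matrix.mul_assoc]
    have := trace_mul_le_trace_of_posSemidef
      (psdSqrt_posSemidef (X * Y).posSemidef_mul_transpose_self) (mul_mem hV hU)
    exact Real.sqrt_le_sqrt (by linarith)

/-- For positive semi-definite `A, B` and `α > 0`, the minimum over unitary `U` of
`‖A^α − B^α U‖_F` equals `(tr[A^{2α} + B^{2α} − 2 (A^α B^{2α} A^α)^{1/2}])^{1/2}`. -/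
theorem stmt2 {n : ℕ} (A B : Matrix (Fin n) (Fin n) ℝ)
    (hA : A.PosSemidef) (hB : B.PosSemidef) (α : ℝ) (hα : 0 < α) :
    IsLeast {r : ℝ | ∃ U ∈ Matrix.unitaryGroup (Fin n) ℝ,
        r = frobNorm (matPow A α - matPow B α * U)}
      (Real.sqrt ((matPow A (2 * α) + matPow B (2 * α)
          - 2 • psdSqrt (matPow A α * matPow B (2 * α) * matPow A α)).trace)) :=
  stmt2_general A B hA hB α
end

section
/- Let H be a separable Hilbert space, A a self-adjoint Hilbert–Schmidt operator with I + A positive definite, and α ∈ ℝ. Then (I+A)^α = I + C for some self-adjoint Hilbert–Schmidt operator C, with ‖C‖_HS ≤ exp(|α| ‖log(I+A)‖_HS) − 1. -/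
/-!
Write `exp (α • L) - 1 = φ (α • L) * (α • L)`, where `φ z = ∑ zⁿ / (n+1)!` (`expSubOneDiv`) is the
entire function `(exp z - 1) / z`. With `s = ‖L‖_HS`, which dominates the operator norm of `L`,
this gives `‖C x‖ ≤ ‖φ (α • L)‖ |α| ‖L x‖ ≤ φ (|α| s) |α| ‖L x‖` for every `x`; summing the
squares over the basis yields `‖C‖_HS ≤ φ (|α| s) |α| s = exp (|α| s) - 1`. Keeping the factor
`L` on the right is what avoids the triangle inequality for infinite sums in the
Hilbert–Schmidt norm.
-/

open scoped RealInnerProductSpace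

variable {H : Type*} [NormedAddCommGroup H] [InnerProductSpace ℝ H]

/-- `T` is a Hilbert–Schmidt operator (relative to the Hilbert basis `b`; the notion is in fact
independent of the choice of basis). -/
def IsHS (b : HilbertBasis ℕ ℝ H) (T : H →L[ℝ] H) : Prop :=
  Summable fun i => ‖T (b i)‖ ^ 2

/-- `T` is a trace class operator: it factors as a product of two Hilbert–Schmidt operators. -/
def IsTC (b : HilbertBasis ℕ ℝ H) (T : H →L[ℝ] H) : Prop :=
  ∃ R S : H →L[ℝ] H, IsHS b R ∧ IsHS b S ∧ T = R * S

/-- The Hilbert–Schmidt norm of an operator. -/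
noncomputable def hsNorm (b : HilbertBasis ℕ ℝ H) (T : H →L[ℝ] H) : ℝ :=
  Real.sqrt (∑' i, ‖T (b i)‖ ^ 2)

/-- The trace of an operator, as the sum `∑ ⟪T eᵢ, eᵢ⟫` over the Hilbert basis `b`. -/
noncomputable def opTrace (b : HilbertBasis ℕ ℝ H) (T : H →L[ℝ] H) : ℝ :=
  ∑' i, ⟪T (b i), b i⟫

open Classical in
/-- The positive square root of a positive operator `T` (the unique positive operator whose
square is `T`); junk value `0` if no positive square root exists. -/
noncomputable def posSqrt [CompleteSpace H] (T : H →L[ℝ] H) : H →L[ℝ] H :=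
  if h : ∃ S : H →L[ℝ] H, S.IsPositive ∧ S * S = T then h.choose else 0

open Nat in
noncomputable def expSubOneDiv {𝔸 : Type*} [NormedRing 𝔸] [NormedAlgebra ℝ 𝔸] (x : 𝔸) : 𝔸 :=
  ∑' n : ℕ, ((n + 1)! : ℝ)⁻¹ • x ^ n

section BanachAlgebra

open Nat

variable {𝔸 : Type*} [NormedRing 𝔸]

theorem norm_pow_le_of_norm_one_le (h1 : ‖(1 : 𝔸)‖ ≤ 1) (x : 𝔸) (n : ℕ) :
    ‖x ^ n‖ ≤ ‖x‖ ^ n := by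
  rcases n.eq_zero_or_pos with rfl | hn
  · simpa using h1
  · exact norm_pow_le' x hn

variable [NormedAlgebra ℝ 𝔸]

theorem summable_norm_expSubOneDiv_series (x : 𝔸) :
    Summable fun n : ℕ => ‖((n + 1)! : ℝ)⁻¹ • x ^ n‖ := by
  refine (NormedSpace.norm_expSeries_summable' (𝕂 := ℝ) x).of_nonneg_of_le
    (fun n => norm_nonneg _) fun n => ?_
  rw [norm_smul, norm_smul]
  gcongr
  simp only [norm_inv, RCLike.norm_natCast]
  gcongr
  omega

theorem norm_expSubOneDiv_le (h1 : ‖(1 : 𝔸)‖ ≤ 1) {x : 𝔸} {r : ℝ} (hx : ‖x‖ ≤ r) :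
    ‖expSubOneDiv x‖ ≤ expSubOneDiv r := by
  have hr : 0 ≤ r := (norm_nonneg x).trans hx
  have hsr : Summable fun n : ℕ => ((n + 1)! : ℝ)⁻¹ • r ^ n := by
    simpa [abs_of_nonneg hr] using summable_norm_expSubOneDiv_series r
  refine (norm_tsum_le_tsum_norm (summable_norm_expSubOneDiv_series x)).trans
    ((summable_norm_expSubOneDiv_series x).tsum_le_tsum (fun n => ?_) hsr)
  rw [norm_smul, smul_eq_mul, norm_inv, RCLike.norm_natCast]
  gcongr
  exact (norm_pow_le_of_norm_one_le h1 x n).trans (pow_le_pow_left₀ (norm_nonneg x) hx n)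

theorem exp_sub_one_eq_expSubOneDiv_mul [CompleteSpace 𝔸] (x : 𝔸) :
    NormedSpace.exp x - 1 = expSubOneDiv x * x := by
  have hexp := (NormedSpace.norm_expSeries_summable' (𝕂 := ℝ) x).of_norm
  rw [congrFun (NormedSpace.exp_eq_tsum ℝ) x, hexp.tsum_eq_zero_add, expSubOneDiv,
    ← (summable_norm_expSubOneDiv_series x).of_norm.tsum_mul_right]
  simp [pow_succ]

end BanachAlgebra

theorem Real.expSubOneDiv_mul_self (t : ℝ) : expSubOneDiv t * t = Real.exp t - 1 := by
  rw [← exp_sub_one_eq_expSubOneDiv_mul, Real.exp_eq_exp_ℝ]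

section HilbertSchmidt

variable {b : HilbertBasis ℕ ℝ H}

theorem IsHS.of_norm_apply_le {S T : H →L[ℝ] H} {K : ℝ} (hS : IsHS b S)
    (h : ∀ x, ‖T x‖ ≤ K * ‖S x‖) : IsHS b T :=
  (hS.mul_left (K ^ 2)).of_nonneg_of_le (fun i => by positivity) fun i =>
    (pow_le_pow_left₀ (norm_nonneg _) (h (b i)) 2).trans_eq (mul_pow _ _ _)

theorem hsNorm_le_of_norm_apply_le {S T : H →L[ℝ] H} {K : ℝ} (hS : IsHS b S) (hK : 0 ≤ K)
    (h : ∀ x, ‖T x‖ ≤ K * ‖S x‖) : hsNorm b T ≤ K * hsNorm b S := by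
  have hsq : ∀ i, ‖T (b i)‖ ^ 2 ≤ K ^ 2 * ‖S (b i)‖ ^ 2 := fun i =>
    (pow_le_pow_left₀ (norm_nonneg _) (h (b i)) 2).trans_eq (mul_pow _ _ _)
  calc hsNorm b T ≤ Real.sqrt (∑' i, K ^ 2 * ‖S (b i)‖ ^ 2) :=
        Real.sqrt_le_sqrt ((hS.of_norm_apply_le h).tsum_le_tsum hsq (hS.mul_left _))
    _ = K * hsNorm b S := by
        rw [tsum_mul_left, Real.sqrt_mul (sq_nonneg K), Real.sqrt_sq hK, hsNorm]

variable [CompleteSpace H]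

open ContinuousLinearMap in
theorem norm_apply_sq_le_hsNorm_adjoint_sq {T : H →L[ℝ] H} (hT : IsHS b (adjoint T)) (x : H) :
    ‖T x‖ ^ 2 ≤ (hsNorm b (adjoint T) * ‖x‖) ^ 2 := by
  have hterm : ∀ i, ⟪T x, b i⟫ * ⟪b i, T x⟫ ≤ ‖x‖ ^ 2 * ‖adjoint T (b i)‖ ^ 2 := fun i => by
    rw [real_inner_comm (b i), ← adjoint_inner_left, mul_comm (‖x‖ ^ 2),
      ← real_inner_self_eq_norm_sq x, ← real_inner_self_eq_norm_sq]
    exact real_inner_mul_inner_self_le _ _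
  have hparseval := b.hasSum_inner_mul_inner (T x) (T x)
  rw [real_inner_self_eq_norm_sq] at hparseval
  calc ‖T x‖ ^ 2 ≤ ∑' i, ‖x‖ ^ 2 * ‖adjoint T (b i)‖ ^ 2 :=
        hparseval.tsum_eq ▸ hparseval.summable.tsum_le_tsum hterm (hT.mul_left _)
    _ = (hsNorm b (adjoint T) * ‖x‖) ^ 2 := by
        rw [tsum_mul_left, mul_pow, hsNorm, Real.sq_sqrt (tsum_nonneg fun i => by positivity)]
        ring

open ContinuousLinearMap in
theorem opNorm_le_hsNorm_adjoint {T : H →L[ℝ] H} (hT : IsHS b (adjoint T)) :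
    ‖T‖ ≤ hsNorm b (adjoint T) :=
  T.opNorm_le_bound (Real.sqrt_nonneg _) fun x =>
    (abs_le_of_sq_le_sq' (norm_apply_sq_le_hsNorm_adjoint_sq hT x)
      (mul_nonneg (Real.sqrt_nonneg _) (norm_nonneg x))).2

theorem IsSelfAdjoint.opNorm_le_hsNorm {T : H →L[ℝ] H} (hsT : IsSelfAdjoint T) (hT : IsHS b T) :
    ‖T‖ ≤ hsNorm b T := by
  simpa only [hsT.adjoint_eq] using opNorm_le_hsNorm_adjoint (T := T) (by rwa [hsT.adjoint_eq])

end HilbertSchmidt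

theorem stmt15_general [CompleteSpace H] (b : HilbertBasis ℕ ℝ H)
    (α : ℝ) (L : H →L[ℝ] H) (hL : IsHS b L) (hsL : IsSelfAdjoint L) :
    ∃ C : H →L[ℝ] H, IsHS b C ∧ IsSelfAdjoint C ∧
      NormedSpace.exp (α • L) = 1 + C ∧
      hsNorm b C ≤ Real.exp (|α| * hsNorm b L) - 1 := by
  set s := hsNorm b L
  have hLs : ‖L‖ ≤ s := hsL.opNorm_le_hsNorm hL
  have hE : ‖expSubOneDiv (α • L)‖ ≤ expSubOneDiv (|α| * s) :=
    norm_expSubOneDiv_le ContinuousLinearMap.norm_id_le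
      ((norm_smul α L).trans_le (by rw [Real.norm_eq_abs]; gcongr))
  have hC : ∀ x, ‖(NormedSpace.exp (α • L) - 1) x‖ ≤ expSubOneDiv (|α| * s) * |α| * ‖L x‖ := by
    intro x
    rw [exp_sub_one_eq_expSubOneDiv_mul]
    calc _ ≤ ‖expSubOneDiv (α • L)‖ * ‖(α • L) x‖ := (expSubOneDiv (α • L)).le_opNorm _
      _ ≤ _ := by
        rw [smul_apply, norm_smul, Real.norm_eq_abs, ← mul_assoc]
        gcongr
  refine ⟨NormedSpace.exp (α • L) - 1, hL.of_norm_apply_le hC,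
    ((IsSelfAdjoint.all α).smul hsL).exp.sub (.one _), (add_sub_cancel _ _).symm, ?_⟩
  calc _ ≤ expSubOneDiv (|α| * s) * |α| * s :=
        hsNorm_le_of_norm_apply_le hL (mul_nonneg ((norm_nonneg _).trans hE) (abs_nonneg α)) hC
    _ = Real.exp (|α| * s) - 1 := by rw [mul_assoc, Real.expSubOneDiv_mul_self]

/-- If `A` is self-adjoint Hilbert–Schmidt with `I + A` positive definite, and
`L = log(I + A)` (a self-adjoint Hilbert–Schmidt operator with `exp L = I + A`), then for any
`α ∈ ℝ`, `(I+A)^α = exp(α L) = I + C` with `C` self-adjoint Hilbert–Schmidt and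
`‖C‖_HS ≤ exp(|α| ‖L‖_HS) − 1`. -/
theorem stmt15 [CompleteSpace H] (b : HilbertBasis ℕ ℝ H)
    (A : H →L[ℝ] H) (hA : IsHS b A) (hsA : IsSelfAdjoint A)
    (hpA : ∃ c > (0 : ℝ), ∀ x : H, c * ‖x‖ ^ 2 ≤ ⟪(1 + A) x, x⟫)
    (α : ℝ) (L : H →L[ℝ] H) (hL : IsHS b L) (hsL : IsSelfAdjoint L)
    (hexp : NormedSpace.exp L = 1 + A) :
    ∃ C : H →L[ℝ] H, IsHS b C ∧ IsSelfAdjoint C ∧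
      NormedSpace.exp (α • L) = 1 + C ∧
      hsNorm b C ≤ Real.exp (|α| * hsNorm b L) - 1 :=
  stmt15_general b α L hL hsL
end

section
/- Let A be a self-adjoint Hilbert–Schmidt operator on a separable Hilbert space H with I + A positive definite. Then lim_{α→0} (1/α²)(‖(I+A)^α‖²_{eHS} − 1) = ‖log(I+A)‖²_{HS}, where ‖B + γI‖²_{eHS} = ‖B‖²_{HS} + γ² is the extended Hilbert–Schmidt norm. Equivalently, lim_{α→0} ‖(I+A)^α − I‖²_{HS}/α² = ‖log(I+A)‖²_{HS}. -/
/-!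
Write `D α = α⁻¹ • (exp (α • L) - 1)`, so that the quotient is `∑ ‖D α eᵢ‖²`. Differentiating
`α ↦ exp (α • L)` at `0` gives `D α eᵢ → L eᵢ`. The derivative `exp (s • L) (L v)` of
`s ↦ exp (s • L) v` factors through `L v`, so the mean value theorem gives `‖D α v‖ ≤ C ‖L v‖`
for `|α| ≤ 1`. As `L` is Hilbert–Schmidt this bound is square-summable over the basis, and
dominated convergence for series yields the limit `∑ ‖L eᵢ‖²`.
-/

open scoped RealInnerProductSpace

variable {H : Type*} [NormedAddCommGroup H] [InnerProductSpace ℝ H]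

open Topology

open Filter NormedSpace

section ExpSmul

variable {E : Type*} [NormedAddCommGroup E] [NormedSpace ℝ E] [CompleteSpace E]

theorem hasDerivAt_exp_smul_apply (L : E →L[ℝ] E) (v : E) (t : ℝ) :
    HasDerivAt (fun s : ℝ => exp (s • L) v) (exp (t • L) (L v)) t := by
  simpa using (hasDerivAt_exp_smul_const L t).clm_apply (hasDerivAt_const t v)

theorem tendsto_inv_smul_exp_smul_sub_one_apply (L : E →L[ℝ] E) (v : E) :
    Tendsto (fun t : ℝ => t⁻¹ • (exp (t • L) - 1) v) (𝓝[≠] 0) (𝓝 (L v)) := by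
  simpa using (hasDerivAt_exp_smul_apply L v 0).tendsto_slope_zero

theorem exists_norm_inv_smul_exp_smul_sub_one_apply_le (L : E →L[ℝ] E) :
    ∃ C, ∀ t : ℝ, |t| ≤ 1 → ∀ v, ‖t⁻¹ • (exp (t • L) - 1) v‖ ≤ C * ‖L v‖ := by
  obtain ⟨C, hC⟩ := (isCompact_closedBall (0 : ℝ) 1).exists_bound_of_continuousOn
    (f := fun s : ℝ => exp (s • L))
    (fun s _ => (hasDerivAt_exp_smul_const L s).continuousAt.continuousWithinAt)
  refine ⟨C, fun t ht v => ?_⟩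
  rcases eq_or_ne t 0 with rfl | ht0
  · simpa using mul_nonneg ((norm_nonneg _).trans (hC 0 (by simp))) (norm_nonneg (L v))
  have hmv : ‖exp (t • L) v - exp ((0 : ℝ) • L) v‖ ≤ C * ‖L v‖ * ‖t - 0‖ :=
    (convex_closedBall (0 : ℝ) 1).norm_image_sub_le_of_norm_hasDerivWithin_le
      (fun s _ => (hasDerivAt_exp_smul_apply L v s).hasDerivWithinAt)
      (fun s hs => ((exp (s • L)).le_opNorm _).trans
        (mul_le_mul_of_nonneg_right (hC s hs) (norm_nonneg _)))
      (Metric.mem_closedBall_self zero_le_one) (by simpa using ht)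
  rw [norm_smul, norm_inv, inv_mul_le_iff₀ (norm_pos_iff.mpr ht0)]
  simpa [mul_comm] using hmv

end ExpSmul

theorem stmt16_general [CompleteSpace H] (b : HilbertBasis ℕ ℝ H)
    (L : H →L[ℝ] H) (hL : IsHS b L) :
    Filter.Tendsto
      (fun α : ℝ => (∑' i, ‖(NormedSpace.exp (α • L) - 1) (b i)‖ ^ 2) / α ^ 2)
      (𝓝[≠] (0 : ℝ)) (𝓝 (∑' i, ‖L (b i)‖ ^ 2)) := by
  obtain ⟨C, hC⟩ := exists_norm_inv_smul_exp_smul_sub_one_apply_le L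
  have hquot : ∀ α : ℝ, (∑' i, ‖(exp (α • L) - 1) (b i)‖ ^ 2) / α ^ 2
      = ∑' i, ‖α⁻¹ • (exp (α • L) - 1) (b i)‖ ^ 2 := fun α => by
    simp only [norm_smul, norm_inv, Real.norm_eq_abs, mul_pow, inv_pow, sq_abs, div_eq_inv_mul,
      tsum_mul_left]
  simp only [hquot]
  refine tendsto_tsum_of_dominated_convergence (hL.mul_left (C ^ 2))
    (fun i => ((tendsto_inv_smul_exp_smul_sub_one_apply L (b i)).norm.pow 2)) ?_
  filter_upwards [nhdsWithin_le_nhds (Icc_mem_nhds neg_one_lt_zero one_pos)] with α hα i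
  rw [norm_pow, norm_norm, ← mul_pow]
  exact pow_le_pow_left₀ (norm_nonneg _) (hC α (abs_le.mpr hα) (b i)) 2

/-- If `A` is self-adjoint Hilbert–Schmidt with `I + A` positive definite and
`L = log(I + A)`, then `‖(I+A)^α − I‖²_HS / α² → ‖log(I+A)‖²_HS` as `α → 0`
(equivalently, `(‖(I+A)^α‖²_eHS − 1)/α²` tends to the same limit, since
`‖B + I‖²_eHS = ‖B‖²_HS + 1`). -/
theorem stmt16 [CompleteSpace H] (b : HilbertBasis ℕ ℝ H)
    (A : H →L[ℝ] H) (hA : IsHS b A) (hsA : IsSelfAdjoint A)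
    (hpA : ∃ c > (0 : ℝ), ∀ x : H, c * ‖x‖ ^ 2 ≤ ⟪(1 + A) x, x⟫)
    (L : H →L[ℝ] H) (hL : IsHS b L) (hsL : IsSelfAdjoint L)
    (hexp : NormedSpace.exp L = 1 + A) :
    Filter.Tendsto
      (fun α : ℝ => (∑' i, ‖(NormedSpace.exp (α • L) - 1) (b i)‖ ^ 2) / α ^ 2)
      (𝓝[≠] (0 : ℝ)) (𝓝 (∑' i, ‖L (b i)‖ ^ 2)) :=
  stmt16_general b L hL
end
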